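/- Let G be a group of orientation-preserving homeomorphisms of ℝ preserving a nonzero Borel measure μ on ℝ that is finite on compact sets. For x ∈ ℝ and f ∈ G define τ_x(f) = μ([x, f(x))) if x < f(x), τ_x(f) = 0 if x = f(x), and τ_x(f) = −μ([f(x), x)) if x > f(x). Then: (1) τ_x(f) is independent of the choice of x, so it defines a function τ : G → ℝ; (2) τ is a group homomorphism from G to the additive group ℝ; (3) for every f ∈ G, f has a fixed point if and only if τ(f) = 0. -/
import Mathlib


open MeasureTheory

/-- The translation number of `f : ℝ → ℝ` at the point `x`, with respect to the
measure `μ`: it is `μ([x, f x))` if `x < f x`, `-μ([f x, x))` if `f x < x`, and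
`0` if `x = f x`. -/
noncomputable def translationNumber (μ : Measure ℝ) (f : ℝ → ℝ) (x : ℝ) : ℝ :=
  if x < f x then (μ (Set.Ico x (f x))).toReal
  else if f x < x then -(μ (Set.Ico (f x) x)).toReal
  else 0

open Set Filter Topology

noncomputable def nuTN (μ : Measure ℝ) (a b : ℝ) : ℝ :=
  (μ (Ico a b)).toReal - (μ (Ico b a)).toReal

lemma nuTN_self (μ : Measure ℝ) (a : ℝ) : nuTN μ a a = 0 := by simp [nuTN]

lemma nuTN_symm (μ : Measure ℝ) (a b : ℝ) : nuTN μ a b = - nuTN μ b a := by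
  unfold nuTN; ring

lemma nuTN_le {μ : Measure ℝ} (hfin : ∀ a b : ℝ, μ (Ico a b) ≠ ⊤) {a b c : ℝ}
    (h1 : a ≤ b) (h2 : b ≤ c) : nuTN μ a b + nuTN μ b c = nuTN μ a c := by
  have hd : Disjoint (Ico a b) (Ico b c) := Ico_disjoint_Ico_same
  have hu : Ico a b ∪ Ico b c = Ico a c := Ico_union_Ico_eq_Ico h1 h2
  have hμ : μ (Ico a c) = μ (Ico a b) + μ (Ico b c) := by
    rw [← hu, measure_union hd measurableSet_Ico]
  simp only [nuTN, Ico_eq_empty (not_lt.2 h1), Ico_eq_empty (not_lt.2 h2),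
    Ico_eq_empty (not_lt.2 (h1.trans h2)), measure_empty, ENNReal.toReal_zero,
    sub_zero, hμ, ENNReal.toReal_add (hfin a b) (hfin b c)]

lemma nuTN_cocycle {μ : Measure ℝ} (hfin : ∀ a b : ℝ, μ (Ico a b) ≠ ⊤) (a b c : ℝ) :
    nuTN μ a b + nuTN μ b c = nuTN μ a c := by
  have s1 : nuTN μ a b = - nuTN μ b a := nuTN_symm μ a b
  have s2 : nuTN μ b c = - nuTN μ c b := nuTN_symm μ b c
  have s3 : nuTN μ a c = - nuTN μ c a := nuTN_symm μ a c
  rcases le_total a b with hab | hba <;> rcases le_total b c with hbc | hcb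
  · exact nuTN_le hfin hab hbc
  · rcases le_total a c with hac | hca
    · have := nuTN_le hfin hac hcb; linarith
    · have := nuTN_le hfin hca hab; linarith
  · rcases le_total a c with hac | hca
    · have := nuTN_le hfin hba hac; linarith
    · have := nuTN_le hfin hbc hca; linarith
  · have := nuTN_le hfin hcb hba; linarith

lemma nuTN_inv {μ : Measure ℝ} {F : ℝ → ℝ}
    (hinv' : ∀ A : Set ℝ, MeasurableSet A → μ (F ⁻¹' A) = μ A)
    (hm : StrictMono F) (a b : ℝ) : nuTN μ (F a) (F b) = nuTN μ a b := by
  have key : ∀ x y : ℝ, μ (Ico (F x) (F y)) = μ (Ico x y) := by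
    intro x y
    have hpre : F ⁻¹' Ico (F x) (F y) = Ico x y := by
      ext t; simp [mem_preimage, mem_Ico, hm.le_iff_le, hm.lt_iff_lt]
    calc μ (Ico (F x) (F y)) = μ (F ⁻¹' Ico (F x) (F y)) :=
          (hinv' _ measurableSet_Ico).symm
      _ = μ (Ico x y) := by rw [hpre]
  simp [nuTN, key]

lemma tnTN_eq (μ : Measure ℝ) (f : ℝ → ℝ) (x : ℝ) :
    translationNumber μ f x = nuTN μ x (f x) := by
  unfold translationNumber nuTN
  rcases lt_trichotomy x (f x) with h | h | h
  · rw [if_pos h, Ico_eq_empty (not_lt.2 h.le)]; simp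
  · rw [if_neg (by rw [← h]; exact lt_irrefl x), if_neg (by rw [← h]; exact lt_irrefl x),
      ← h, Ico_eq_empty (lt_irrefl x)]
    simp
  · rw [if_neg (not_lt.2 h.le), if_pos h]
    rw [Ico_eq_empty (a := x) (b := f x) (not_lt.2 h.le)]
    simp

/-- If `F` is continuous with `t < F t` everywhere and every step `[t, F t)` is
`μ`-null, then `μ = 0`. -/
lemma measure_eq_zero_of_steps_null {μ : Measure ℝ} {F : ℝ → ℝ}
    (hcont : Continuous F) (hlt : ∀ t, t < F t)
    (h0 : ∀ t, μ (Ico t (F t)) = 0) : μ = 0 := by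
  have iter0 : ∀ a : ℝ, ∀ n : ℕ, μ (Ico a (F^[n] a)) = 0 := by
    intro a n
    induction n with
    | zero => simp
    | succ n ih =>
      have hsub : Ico a (F^[n+1] a) ⊆ Ico a (F^[n] a) ∪ Ico (F^[n] a) (F^[n+1] a) :=
        Ico_subset_Ico_union_Ico
      refine measure_mono_null hsub ?_
      refine measure_union_null ih ?_
      rw [Function.iterate_succ_apply']
      exact h0 _
  have key : ∀ a : ℝ, Tendsto (fun n : ℕ => F^[n] a) atTop atTop := by
    intro a
    have hm' : Monotone fun n : ℕ => F^[n] a :=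
      monotone_nat_of_le_succ fun n => by
        rw [Function.iterate_succ_apply']; exact (hlt _).le
    rcases tendsto_of_monotone hm' with htop | ⟨l, hl⟩
    · exact htop
    · exfalso
      have h1 : Tendsto (fun n : ℕ => F^[n+1] a) atTop (𝓝 l) :=
        hl.comp (tendsto_add_atTop_nat 1)
      have h2 : Tendsto (fun n : ℕ => F (F^[n] a)) atTop (𝓝 (F l)) :=
        (hcont.tendsto l).comp hl
      have h3 : (fun n : ℕ => F^[n+1] a) = fun n : ℕ => F (F^[n] a) := by
        funext n; rw [Function.iterate_succ_apply']
      rw [h3] at h1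
      have : F l = l := tendsto_nhds_unique h2 h1
      exact absurd this (hlt l).ne'
  have hIco : ∀ c d : ℝ, μ (Ico c d) = 0 := by
    intro c d
    rcases ((key c).eventually_ge_atTop d).exists with ⟨n, hn⟩
    exact measure_mono_null (Ico_subset_Ico_right hn) (iter0 c n)
  have huniv : μ univ = 0 := by
    have hsub : (univ : Set ℝ) ⊆ ⋃ n : ℕ, Ico (-(n:ℝ)) n := by
      intro x _
      obtain ⟨n, hn⟩ := exists_nat_gt |x|
      refine mem_iUnion.2 ⟨n, ?_⟩
      have h1 := neg_abs_le x
      have h2 := le_abs_self x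
      simp only [mem_Ico]
      constructor <;> [linarith; linarith]
    exact measure_mono_null hsub (measure_iUnion_null fun n => hIco _ _)
  exact Measure.measure_univ_eq_zero.mp huniv

/-- Let `G` be a group of orientation-preserving homeomorphisms of `ℝ`
preserving a nonzero Borel measure `μ` which is finite on compact sets.  Then:
(1) the translation number `τ_x(f)` is independent of the basepoint `x`;
(2) `τ` is a homomorphism from `G` to the additive group `ℝ`;
(3) an element `f` of `G` has a fixed point if and only if `τ(f) = 0`. -/
theorem translation_number_properties
    {G : Type*} [Group G] (ρ : G → ℝ → ℝ)
    (hmul : ∀ g h : G, ρ (g * h) = ρ g ∘ ρ h)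
    (hone : ρ 1 = id)
    (hhomeo : ∀ g : G, StrictMono (ρ g) ∧ Function.Surjective (ρ g))
    (μ : Measure ℝ) (hμ0 : μ ≠ 0)
    (hμfin : ∀ K : Set ℝ, IsCompact K → μ K < ⊤)
    (hinv : ∀ g : G, ∀ A : Set ℝ, MeasurableSet A → μ (ρ g ⁻¹' A) = μ A) :
    (∀ f : G, ∀ x y : ℝ,
      translationNumber μ (ρ f) x = translationNumber μ (ρ f) y) ∧
    (∀ f g : G, ∀ x : ℝ,
      translationNumber μ (ρ (f * g)) x
        = translationNumber μ (ρ f) x + translationNumber μ (ρ g) x) ∧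
    (∀ f : G, ∀ x : ℝ,
      ((∃ y : ℝ, ρ f y = y) ↔ translationNumber μ (ρ f) x = 0)) := by
  have hfin : ∀ a b : ℝ, μ (Ico a b) ≠ ⊤ := fun a b =>
    ((measure_mono Ico_subset_Icc_self).trans_lt (hμfin _ isCompact_Icc)).ne
  have hcont : ∀ g : G, Continuous (ρ g) := fun g =>
    ((hhomeo g).1.orderIsoOfSurjective _ (hhomeo g).2).continuous
  have part1 : ∀ f : G, ∀ x y : ℝ,
      translationNumber μ (ρ f) x = translationNumber μ (ρ f) y := by
    intro f x y
    rw [tnTN_eq, tnTN_eq]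
    have hi : nuTN μ (ρ f y) (ρ f x) = nuTN μ y x :=
      nuTN_inv (fun A hA => hinv f A hA) (hhomeo f).1 y x
    have c1 := nuTN_cocycle hfin x y (ρ f x)
    have c2 := nuTN_cocycle hfin y (ρ f y) (ρ f x)
    have s := nuTN_symm μ x y
    linarith
  have part2 : ∀ f g : G, ∀ x : ℝ,
      translationNumber μ (ρ (f * g)) x
        = translationNumber μ (ρ f) x + translationNumber μ (ρ g) x := by
    intro f g x
    rw [part1 f x (ρ g x), tnTN_eq, tnTN_eq, tnTN_eq, hmul]
    have c := nuTN_cocycle hfin x (ρ g x) (ρ f (ρ g x))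
    simp only [Function.comp_apply]
    linarith
  refine ⟨part1, part2, ?_⟩
  intro f x
  constructor
  · rintro ⟨y, hy⟩
    rw [part1 f x y, tnTN_eq, hy, nuTN_self]
  · intro hτ
    by_contra hno
    push_neg at hno
    -- all translation numbers of f vanish
    have hall : ∀ t : ℝ, translationNumber μ (ρ f) t = 0 := fun t =>
      (part1 f t x).trans hτ
    -- dichotomy
    have hdich : (∀ t, t < ρ f t) ∨ (∀ t, ρ f t < t) := by
      by_contra hc
      push_neg at hc
      obtain ⟨⟨a, ha⟩, ⟨b, hb⟩⟩ := hc
      have ha' : ρ f a < a := lt_of_le_of_ne ha (hno a)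
      have hb' : b < ρ f b := lt_of_le_of_ne (le_of_not_gt (by
        intro h; exact absurd h.le (not_le.2 (lt_of_le_of_ne hb (fun e => hno b e.symm))))) (fun e => hno b e.symm)
      set g : ℝ → ℝ := fun t => ρ f t - t with hg
      have hgc : Continuous g := (hcont f).sub continuous_id
      have hmem : (0:ℝ) ∈ uIcc (g a) (g b) := by
        rw [Set.mem_uIcc]
        left
        constructor
        · simp only [hg]; linarith
        · simp only [hg]; linarith
      obtain ⟨c, _, hc0⟩ := intermediate_value_uIcc (hgc.continuousOn) hmem
      exact hno c (by simp only [hg] at hc0; linarith)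
    rcases hdich with hup | hdown
    · -- every step is null
      have h0 : ∀ t : ℝ, μ (Ico t (ρ f t)) = 0 := by
        intro t
        have := hall t
        rw [translationNumber, if_pos (hup t)] at this
        rcases (ENNReal.toReal_eq_zero_iff _).1 this with h | h
        · exact h
        · exact absurd h (hfin _ _)
      exact hμ0 (measure_eq_zero_of_steps_null (hcont f) hup h0)
    · -- use f⁻¹
      have hid1 : ρ f ∘ ρ f⁻¹ = id := by rw [← hmul, mul_inv_cancel]; exact hone
      have hid2 : ρ f⁻¹ ∘ ρ f = id := by rw [← hmul, inv_mul_cancel]; exact hone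
      have hfix : ∀ t : ℝ, ρ f (ρ f⁻¹ t) = t := fun t => congrFun hid1 t
      have hup' : ∀ t, t < ρ f⁻¹ t := by
        intro t
        have := hdown (ρ f⁻¹ t)
        rwa [hfix t] at this
      have h0 : ∀ t : ℝ, μ (Ico t (ρ f⁻¹ t)) = 0 := by
        intro t
        have := hall (ρ f⁻¹ t)
        rw [translationNumber, if_neg (not_lt.2 (hdown (ρ f⁻¹ t)).le),
          if_pos (hdown (ρ f⁻¹ t)), hfix t, neg_eq_zero] at this
        rcases (ENNReal.toReal_eq_zero_iff _).1 this with h | h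
        · exact h
        · exact absurd h (hfin _ _)
      exact hμ0 (measure_eq_zero_of_steps_null (hcont f⁻¹) hup' h0)
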